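/- arXiv:1308.0787 — 2 statements merged into one kernel-verified Lean document; each statement's English description precedes it below -/
import Mathlib

section
/- In the ring of formal power series Q[[t₁,t₂]], the identity 2(t₁+t₂)·( t₁t₂/((1-e^{-t₁})(1-e^{-t₂})) - t₁·t₂/(1-e^{-t₂}) ) + (t₁+t₂)·t₁·2t₂/(1-e^{-2t₂}) = ( t₁·2t₂·(t₁+t₂) / ((1-e^{-t₁})(1-e^{-2t₂})(1-e^{-(t₁+t₂)})) ) · (1 - e^{-2(t₁+t₂)}) holds. -/
/-!
Put `x = e^{-t₁}` and `y = e^{-t₂}`. Since `w ↦ e^{-w}` turns sums of linear forms into products,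
`e^{-2t₂} = y²`, `e^{-(t₁+t₂)} = xy` and `e^{-2(t₁+t₂)} = (xy)²`, so the claim is an identity of
rational functions in `t₁, t₂, x, y`. It holds as soon as `1 - x`, `1 - y²` and `1 - xy` are
invertible, and they are nonzero in `ℚ[[t₁,t₂]]` because `1 - e^{-w}` has linear part `w ≠ 0`.
-/

/-- `expNeg a` is the formal power series `exp (-w) ∈ ℚ[[t₁,…,t_r]]` for the linear form
`w = ∑ⱼ aⱼ tⱼ`: its coefficient on the monomial `d` is `∏ⱼ (-aⱼ)^{dⱼ}/dⱼ!`. -/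
noncomputable def expNeg {r : ℕ} (a : Fin r → ℚ) : MvPowerSeries (Fin r) ℚ :=
  fun d : Fin r →₀ ℕ => ∏ j : Fin r, (-(a j)) ^ (d j) / (Nat.factorial (d j) : ℚ)

instance : IsDomain (MvPowerSeries (Fin 2) ℚ) := NoZeroDivisors.to_isDomain _

open Finset Nat

theorem add_pow_div_factorial {K : Type*} [Field K] [CharZero K] (x y : K) (n : ℕ) :
    (x + y) ^ n / n ! = ∑ p ∈ antidiagonal n, x ^ p.1 / p.1 ! * (y ^ p.2 / p.2 !) := by
  have h := congrArg (PowerSeries.coeff n) (PowerSeries.exp_mul_exp_eq_exp_add (A := K) x y)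
  simpa [PowerSeries.coeff_mul, PowerSeries.coeff_rescale, PowerSeries.coeff_exp, div_eq_mul_inv,
    mul_comm, mul_left_comm, mul_assoc] using h.symm

theorem MvPowerSeries.coeff_mul_of_coeff_eq_prod {σ R : Type*} [Fintype σ] [CommSemiring R]
    {F G : MvPowerSeries σ R} {f g : σ → ℕ → R}
    (hF : ∀ d, coeff d F = ∏ j, f j (d j)) (hG : ∀ d, coeff d G = ∏ j, g j (d j))
    (d : σ →₀ ℕ) :
    coeff d (F * G) = ∏ j, ∑ p ∈ antidiagonal (d j), f j p.1 * g j p.2 := by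
  classical
  rw [coeff_mul, prod_univ_sum]
  refine sum_nbij' (fun q j => (q.1 j, q.2 j))
    (fun p => (Finsupp.equivFunOnFinite.symm fun j => (p j).1,
      Finsupp.equivFunOnFinite.symm fun j => (p j).2)) ?_ ?_ ?_ ?_ ?_
  · intro q hq
    rw [HasAntidiagonal.mem_antidiagonal] at hq
    simp [Fintype.mem_piFinset, ← hq]
  · intro p hp
    rw [Fintype.mem_piFinset] at hp
    simp only [HasAntidiagonal.mem_antidiagonal] at hp ⊢
    ext j; simp [hp j]
  · intro q _; simp
  · intro p _; simp
  · intro q _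
    simp [hF, hG, prod_mul_distrib]

theorem coeff_expNeg {r : ℕ} (a : Fin r → ℚ) (d : Fin r →₀ ℕ) :
    MvPowerSeries.coeff d (expNeg a) = ∏ j, (-a j) ^ d j / (d j)! :=
  rfl

theorem expNeg_add {r : ℕ} (a b : Fin r → ℚ) : expNeg (a + b) = expNeg a * expNeg b := by
  ext d
  rw [MvPowerSeries.coeff_mul_of_coeff_eq_prod (f := fun j n => (-a j) ^ n / n !)
    (g := fun j n => (-b j) ^ n / n !) (coeff_expNeg a) (coeff_expNeg b), coeff_expNeg]
  refine prod_congr rfl fun j _ => ?_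
  rw [Pi.add_apply, neg_add, add_pow_div_factorial]

theorem coeff_single_one_sub_expNeg {r : ℕ} (a : Fin r → ℚ) (j : Fin r) :
    MvPowerSeries.coeff (Finsupp.single j 1) (1 - expNeg a) = a j := by
  rw [map_sub, MvPowerSeries.coeff_one, if_neg (Finsupp.single_ne_zero.mpr one_ne_zero),
    coeff_expNeg, prod_eq_single j]
  · simp
  · intro i _ hi
    simp [Finsupp.single_eq_of_ne hi]
  · simp

theorem one_sub_expNeg_ne_zero {r : ℕ} {a : Fin r → ℚ} {j : Fin r} (h : a j ≠ 0) :
    1 - expNeg a ≠ 0 := by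
  intro h0
  exact h (by simpa [h0] using (coeff_single_one_sub_expNeg a j).symm)

theorem todd_identity {K : Type*} [Field K] {x y : K} (t₁ t₂ : K) (hx : 1 - x ≠ 0)
    (hy : 1 - y ^ 2 ≠ 0) (hxy : 1 - x * y ≠ 0) :
    2 * (t₁ + t₂) * (t₁ * t₂ / ((1 - x) * (1 - y)) - t₁ * (t₂ / (1 - y)))
        + (t₁ + t₂) * t₁ * (2 * t₂ / (1 - y ^ 2))
      = t₁ * (2 * t₂) * (t₁ + t₂) / ((1 - x) * (1 - y ^ 2) * (1 - x * y))
          * (1 - (x * y) ^ 2) := by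
  have hy' : 1 - y ≠ 0 := fun h => hy (by linear_combination (1 + y) * h)
  field_simp
  ring

/-- Computation of the equivariant Todd class of the Whitney umbrella
`X = {x₁² = x₂²x₃} ⊂ ℂ³` at the origin (torus characters `t₁+t₂`, `t₁`, `2t₂`), carried out
in the fraction field of `ℚ[[t₁,t₂]]`:
`2(t₁+t₂)·(t₁t₂/((1-e^{-t₁})(1-e^{-t₂})) - t₁·t₂/(1-e^{-t₂})) + (t₁+t₂)·t₁·2t₂/(1-e^{-2t₂})
  = (t₁·2t₂·(t₁+t₂)/((1-e^{-t₁})(1-e^{-2t₂})(1-e^{-(t₁+t₂)})))·(1-e^{-2(t₁+t₂)})`. -/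
theorem whitney_umbrella_todd_class :
    let K := FractionRing (MvPowerSeries (Fin 2) ℚ)
    let ι : MvPowerSeries (Fin 2) ℚ →+* K := algebraMap _ _
    let t₁ : K := ι (MvPowerSeries.X 0)
    let t₂ : K := ι (MvPowerSeries.X 1)
    let E : ℚ → ℚ → K := fun a b => ι (expNeg ![a, b])
    2 * (t₁ + t₂) * (t₁ * t₂ / ((1 - E 1 0) * (1 - E 0 1)) - t₁ * (t₂ / (1 - E 0 1)))
        + (t₁ + t₂) * t₁ * (2 * t₂ / (1 - E 0 2))
      = t₁ * (2 * t₂) * (t₁ + t₂) / ((1 - E 1 0) * (1 - E 0 2) * (1 - E 1 1))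
          * (1 - E 2 2) := by
  intro K ι t₁ t₂ E
  have hE_add (a b c d : ℚ) : E (a + c) (b + d) = E a b * E c d := by
    simp only [E, ← map_mul, ← expNeg_add, Matrix.cons_add_cons, Matrix.empty_add_empty]
  have hE_ne {a b : ℚ} (j : Fin 2) (h : ![a, b] j ≠ 0) : 1 - E a b ≠ 0 := by
    rw [← map_one ι, ← map_sub]
    exact (map_ne_zero_iff ι (IsFractionRing.injective _ K)).mpr (one_sub_expNeg_ne_zero h)
  have h10 : 1 - E 1 0 ≠ 0 := hE_ne 0 (by simp)
  have h02 : 1 - E 0 2 ≠ 0 := hE_ne 1 (by simp)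
  have h11 : 1 - E 1 1 ≠ 0 := hE_ne 0 (by simp)
  have hy2 : E 0 2 = E 0 1 ^ 2 := by rw [sq, ← hE_add]; norm_num
  have hxy : E 1 1 = E 1 0 * E 0 1 := by rw [← hE_add]; norm_num
  have h22 : E 2 2 = E 1 1 ^ 2 := by rw [sq, ← hE_add]; norm_num
  rw [hy2] at h02
  rw [hxy] at h11
  rw [h22, hxy, hy2]
  exact todd_identity t₁ t₂ h10 h02 h11
end

section
/- For the polynomial Q(y,T) = ∑_{k=0}^{12} P_k(y) T^k with the P_k as listed in the paper (for the radial C* action on the 4×4 determinant variety complement), after substituting y = -1 - δ and T = 1 + S, all coefficients of the resulting polynomial in Q[δ, S] are nonnegative. -/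
open Polynomial

/-- The coefficient polynomials `P₀,…,P₁₂` of the equivariant `χ_y`-class of the open
determinantal cell in `ℂ¹⁶` (radial `ℂ*` action), as listed in the paper. -/
noncomputable def P : ℕ → Polynomial ℚ
  | 0 => (1 - X) ^ 2 * (1 + X ^ 2) * (1 - X + X ^ 2)
  | 1 => 16 * (1 - X) * X * (1 - X + X ^ 2) ^ 2
  | 2 => 12 * (1 - X) ^ 2 * X ^ 2 * (10 - 13 * X + 10 * X ^ 2)
  | 3 => 16 * (1 - X) * X ^ 2 * (1 + 44 * X - 79 * X ^ 2 + 44 * X ^ 3 + X ^ 4)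
  | 4 => -((1 - X) ^ 2 * X *
      (1 + 29 * X + 62 * X ^ 2 - 2902 * X ^ 3 + 62 * X ^ 4 + 29 * X ^ 5 + X ^ 6))
  | 5 => -(16 * (1 - X) * X ^ 3 * (11 + 62 * X - 492 * X ^ 2 + 62 * X ^ 3 + 11 * X ^ 4))
  | 6 => 4 * X ^ 3 *
      (9 - 86 * X - 1139 * X ^ 2 + 3456 * X ^ 3 - 1139 * X ^ 4 - 86 * X ^ 5 + 9 * X ^ 6)
  | 7 => 16 * (1 - X) * X ^ 4 * (11 + 62 * X - 492 * X ^ 2 + 62 * X ^ 3 + 11 * X ^ 4)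
  | 8 => -((1 - X) ^ 2 * X ^ 3 *
      (1 + 29 * X + 62 * X ^ 2 - 2902 * X ^ 3 + 62 * X ^ 4 + 29 * X ^ 5 + X ^ 6))
  | 9 => -(16 * (1 - X) * X ^ 5 * (1 + 44 * X - 79 * X ^ 2 + 44 * X ^ 3 + X ^ 4))
  | 10 => 12 * (1 - X) ^ 2 * X ^ 6 * (10 - 13 * X + 10 * X ^ 2)
  | 11 => -(16 * (1 - X) * X ^ 6 * (1 - X + X ^ 2) ^ 2)
  | 12 => (1 - X) ^ 2 * X ^ 6 * (1 + X ^ 2) * (1 - X + X ^ 2)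
  | _ => 0

open MvPolynomial in
lemma term_nonneg (a : ℚ) (ha : 0 ≤ a) (i j : ℕ) (m : Fin 2 →₀ ℕ) :
    0 ≤ MvPolynomial.coeff m
      (MvPolynomial.C a * MvPolynomial.X (0 : Fin 2) ^ i * MvPolynomial.X 1 ^ j) := by
  rw [MvPolynomial.X_pow_eq_monomial, MvPolynomial.X_pow_eq_monomial, MvPolynomial.C_mul_monomial, MvPolynomial.monomial_mul, mul_one,
    MvPolynomial.coeff_monomial]
  split <;> simp [ha]

set_option maxHeartbeats 4000000 in
set_option maxRecDepth 10000 in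
/-- Positivity after the substitution `y = -1 - δ`, `T = 1 + S`: all coefficients of the
bivariate polynomial obtained from `Q(y,T) = ∑_{k=0}^{12} P_k(y) Tᵏ` by this substitution
are nonnegative. Here `δ` is the variable `X 0` and `S` is the variable `X 1` of
`ℚ[δ,S] = MvPolynomial (Fin 2) ℚ`. -/
theorem chi_y_substituted_coefficients_nonneg :
    let δ : MvPolynomial (Fin 2) ℚ := MvPolynomial.X 0
    let S : MvPolynomial (Fin 2) ℚ := MvPolynomial.X 1
    let Q : MvPolynomial (Fin 2) ℚ :=
      ∑ k ∈ Finset.range 13, Polynomial.aeval (-1 - δ) (P k) * (1 + S) ^ k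
    ∀ m : Fin 2 →₀ ℕ, 0 ≤ MvPolynomial.coeff m Q := by
  intro δ S Q m
  have hQ : Q = MvPolynomial.C (24:ℚ) * δ^0 * S^12 + MvPolynomial.C (144:ℚ) * δ^1 * S^11 + MvPolynomial.C (216:ℚ) * δ^1 * S^12 + MvPolynomial.C (480:ℚ) * δ^2 * S^10 + MvPolynomial.C (1272:ℚ) * δ^2 * S^11 + MvPolynomial.C (890:ℚ) * δ^2 * S^12 + MvPolynomial.C (1080:ℚ) * δ^3 * S^9 + MvPolynomial.C (4020:ℚ) * δ^3 * S^10 + MvPolynomial.C (5088:ℚ) * δ^3 * S^11 + MvPolynomial.C (2224:ℚ) * δ^3 * S^12 + MvPolynomial.C (1756:ℚ) * δ^4 * S^8 + MvPolynomial.C (8372:ℚ) * δ^4 * S^9 + MvPolynomial.C (15062:ℚ) * δ^4 * S^10 + MvPolynomial.C (12172:ℚ) * δ^4 * S^11 + MvPolynomial.C (3761:ℚ) * δ^4 * S^12 + MvPolynomial.C (2128:ℚ) * δ^5 * S^7 + MvPolynomial.C (12344:ℚ) * δ^5 * S^8 + MvPolynomial.C (28636:ℚ) * δ^5 * S^9 +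 MvPolynomial.C (33250:ℚ) * δ^5 * S^10 + MvPolynomial.C (19364:ℚ) * δ^5 * S^11 + MvPolynomial.C (4543:ℚ) * δ^5 * S^12 + MvPolynomial.C (1952:ℚ) * δ^6 * S^6 + MvPolynomial.C (13304:ℚ) * δ^6 * S^7 + MvPolynomial.C (37671:ℚ) * δ^6 * S^8 + MvPolynomial.C (56720:ℚ) * δ^6 * S^9 + MvPolynomial.C (47904:ℚ) * δ^6 * S^10 + MvPolynomial.C (21528:ℚ) * δ^6 * S^11 + MvPolynomial.C (4026:ℚ) * δ^6 * S^12 + MvPolynomial.C (1360:ℚ) * δ^7 * S^5 + MvPolynomial.C (10616:ℚ) * δ^7 * S^6 + MvPolynomial.C (35368:ℚ) * δ^7 * S^7 + MvPolynomial.C (65169:ℚ) * δ^7 * S^8 + MvPolynomial.C (71700:ℚ) * δ^7 * S^9 + MvPolynomial.C (47086:ℚ) * δ^7 * S^10 + MvPolynomial.C (17084:ℚ) * δ^7 * S^11 + MvPolynomial.C (2641:ℚ) * δ^7 * S^12 + MvPolynomial.C (712:ℚ) * δ^8 * S^4 + MvPolynomial.C (6248:ℚ) * δ^8 * S^5 +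 MvPolynomial.C (23860:ℚ) * δ^8 * S^6 + MvPolynomial.C (51792:ℚ) * δ^8 * S^7 + MvPolynomial.C (69882:ℚ) * δ^8 * S^8 + MvPolynomial.C (60000:ℚ) * δ^8 * S^9 + MvPolynomial.C (32000:ℚ) * δ^8 * S^10 + MvPolynomial.C (9688:ℚ) * δ^8 * S^11 + MvPolynomial.C (1274:ℚ) * δ^8 * S^12 + MvPolynomial.C (272:ℚ) * δ^9 * S^3 + MvPolynomial.C (2648:ℚ) * δ^9 * S^4 + MvPolynomial.C (11376:ℚ) * δ^9 * S^5 + MvPolynomial.C (28328:ℚ) * δ^9 * S^6 + MvPolynomial.C (45080:ℚ) * δ^9 * S^7 + MvPolynomial.C (47553:ℚ) * δ^9 * S^8 + MvPolynomial.C (33252:ℚ) * δ^9 * S^9 + MvPolynomial.C (14862:ℚ) * δ^9 * S^10 + MvPolynomial.C (3852:ℚ) * δ^9 * S^11 + MvPolynomial.C (441:ℚ) * δ^9 * S^12 + MvPolynomial.C (72:ℚ) * δ^10 * S^2 + MvPolynomial.C (768:ℚ) * δ^10 * S^3 + MvPolynomial.C (3656:ℚ) * δ^10 * S^4 + MvPolynomial.C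 (10240:ℚ) * δ^10 * S^5 + MvPolynomial.C (18704:ℚ) * δ^10 * S^6 + MvPolynomial.C (23296:ℚ) * δ^10 * S^7 + MvPolynomial.C (20048:ℚ) * δ^10 * S^8 + MvPolynomial.C (11776:ℚ) * δ^10 * S^9 + MvPolynomial.C (4520:ℚ) * δ^10 * S^10 + MvPolynomial.C (1024:ℚ) * δ^10 * S^11 + MvPolynomial.C (104:ℚ) * δ^10 * S^12 + MvPolynomial.C (12:ℚ) * δ^11 * S^1 + MvPolynomial.C (138:ℚ) * δ^11 * S^2 + MvPolynomial.C (716:ℚ) * δ^11 * S^3 + MvPolynomial.C (2215:ℚ) * δ^11 * S^4 + MvPolynomial.C (4544:ℚ) * δ^11 * S^5 + MvPolynomial.C (6496:ℚ) * δ^11 * S^6 + MvPolynomial.C (6608:ℚ) * δ^11 * S^7 + MvPolynomial.C (4786:ℚ) * δ^11 * S^8 + MvPolynomial.C (2420:ℚ) * δ^11 * S^9 + MvPolynomial.C (814:ℚ) * δ^11 * S^10 + MvPolynomial.C (164:ℚ) * δ^11 * S^11 + MvPolynomial.C (15:ℚ) * δ^11 * S^12 + MvPolynomial.C (1:ℚ)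 * δ^12 * S^0 + MvPolynomial.C (12:ℚ) * δ^12 * S^1 + MvPolynomial.C (66:ℚ) * δ^12 * S^2 + MvPolynomial.C (220:ℚ) * δ^12 * S^3 + MvPolynomial.C (495:ℚ) * δ^12 * S^4 + MvPolynomial.C (792:ℚ) * δ^12 * S^5 + MvPolynomial.C (924:ℚ) * δ^12 * S^6 + MvPolynomial.C (792:ℚ) * δ^12 * S^7 + MvPolynomial.C (495:ℚ) * δ^12 * S^8 + MvPolynomial.C (220:ℚ) * δ^12 * S^9 + MvPolynomial.C (66:ℚ) * δ^12 * S^10 + MvPolynomial.C (12:ℚ) * δ^12 * S^11 + MvPolynomial.C (1:ℚ) * δ^12 * S^12 := by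
    show (∑ k ∈ Finset.range 13, Polynomial.aeval (-1 - δ) (P k) * (1 + S) ^ k) = _
    simp only [Finset.sum_range_succ, Finset.sum_range_zero, P, map_add, map_sub, map_mul,
      map_pow, map_neg, map_one, map_ofNat, Polynomial.aeval_X]
    ring
  rw [hQ]
  repeat' apply add_nonneg
  all_goals exact term_nonneg _ (by norm_num) _ _ m
end
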